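/- arXiv:1307.1956 — 7 statements merged into one kernel-verified Lean document; each statement's English description precedes it below -/
import Mathlib

section
/- Let K be a valued field with valuation ring O, maximal ideal m, and residue field F = O/m. Let f ∈ O[X] be a monic polynomial whose reduction f̄ ∈ F[X] has no zero in F. Then for every x ∈ K, f(x) ≠ 0 and f(x)⁻¹ ∈ O. -/
/-!
If `f(x) ∈ O`, then `x` is a root of the monic polynomial `f - f(x) ∈ O[X]`, so `x` is integral
over the integrally closed ring `O` and lies in `O`; then `f̄(x̄) ≠ 0` makes `f(x)` a unit of `O`.
If `f(x) ∉ O`, then `f(x) ≠ 0` and `f(x)⁻¹ ∈ O` because `O` is a valuation ring.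
-/

open Polynomial IsLocalRing

theorem IsLocalRing.isUnit_eval_of_eval_residue_ne_zero {R : Type*} [CommRing R] [IsLocalRing R]
    (f : R[X]) (y : R) (h : eval (residue R y) (f.map (residue R)) ≠ 0) : IsUnit (f.eval y) := by
  rwa [eval_map_apply, residue_ne_zero_iff_isUnit] at h

namespace ValuationSubring

variable {K : Type*} [Field K] (O : ValuationSubring K)

theorem coe_ne_zero_and_inv_mem_of_isUnit {a : O} (ha : IsUnit a) :
    (a : K) ≠ 0 ∧ (a : K)⁻¹ ∈ O := by
  obtain ⟨u, rfl⟩ := ha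
  have h : ((u : O) : K) * ((u⁻¹ : Oˣ) : O) = 1 := by exact_mod_cast congrArg Subtype.val u.mul_inv
  exact ⟨left_ne_zero_of_mul_eq_one h, inv_eq_of_mul_eq_one_right h ▸ (u⁻¹ : Oˣ).1.2⟩

theorem mem_of_monic_of_eval_mem {f : O[X]} (hf : f.Monic) (hdeg : 0 < f.degree) {x : K}
    (hx : eval x (f.map O.subtype) ∈ O) : x ∈ O := by
  have hint : IsIntegral O x := by
    refine ⟨f - C ⟨_, hx⟩, hf.sub_of_left (degree_C_le.trans_lt hdeg), ?_⟩
    rw [eval₂_sub, eval₂_C, eval₂_eq_eval_map]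
    exact sub_self _
  obtain ⟨y, rfl⟩ := IsIntegrallyClosed.isIntegral_iff.mp hint
  exact y.2

end ValuationSubring

/-- For a valued field `K` with valuation ring `O` and residue field
`F = O/m`, if `f ∈ O[X]` is monic and its reduction mod `m` has no zero in `F`,
then `f(x) ≠ 0` for every `x ∈ K` and `f(x)⁻¹ ∈ O`. -/
theorem statement0 (K : Type*) [Field K] (O : ValuationSubring K)
    (f : Polynomial O) (hf : f.Monic)
    (hres : ∀ z : IsLocalRing.ResidueField O,
      Polynomial.eval z (f.map (IsLocalRing.residue O)) ≠ 0) :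
    ∀ x : K, Polynomial.eval x (f.map O.subtype) ≠ 0 ∧
      (Polynomial.eval x (f.map O.subtype))⁻¹ ∈ O := by
  intro x
  by_cases hdeg : f.degree ≤ 0
  · simp [hf.degree_le_zero_iff_eq_one.mp hdeg]
  by_cases hmem : eval x (f.map O.subtype) ∈ O
  · have hxO : x ∈ O := O.mem_of_monic_of_eval_mem hf (not_le.mp hdeg) hmem
    have hunit : IsUnit (f.eval ⟨x, hxO⟩) :=
      isUnit_eval_of_eval_residue_ne_zero f ⟨x, hxO⟩ (hres _)
    rw [show eval x (f.map O.subtype) = f.eval ⟨x, hxO⟩ from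
      eval_map_apply (p := f) O.subtype ⟨x, hxO⟩]
    exact O.coe_ne_zero_and_inv_mem_of_isUnit hunit
  · exact ⟨fun h ↦ hmem (h ▸ O.zero_mem), (O.mem_or_inv_mem _).resolve_left hmem⟩
end

section
/- Let K be a valued field with valuation ring O, maximal ideal m, residue field F. Let f ∈ O[X] be monic with f̄ having no zero in F, and let a ∈ K. Then the set U_{f,a} = {f(x)⁻¹ − f(a)⁻¹ : x ∈ K} is contained in O. -/
/-!
If `f(x)⁻¹ ∉ O` then `f(x) ∈ O`, so `x` is a root of the monic polynomial `f - f(x)` over `O`;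
as `O` is integrally closed, `x ∈ O`. But then `f(x)` reduces to `f̄(x̄) ≠ 0`, so it is a unit
of `O` and `f(x)⁻¹ ∈ O` after all.
-/

open Polynomial

theorem ValuationSubring.mem_of_isIntegral {K : Type*} [Field K] (O : ValuationSubring K) {x : K}
    (hx : IsIntegral O x) : x ∈ O := by
  obtain ⟨y, rfl⟩ := IsIntegrallyClosed.isIntegral_iff.mp hx
  exact y.2

theorem ValuationSubring.mem_of_monic_eval_mem {K : Type*} [Field K] (O : ValuationSubring K)
    {f : O[X]} (hf : f.Monic) (hdeg : f.natDegree ≠ 0) {x : K}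
    (hfx : (f.map O.subtype).eval x ∈ O) : x ∈ O := by
  refine O.mem_of_isIntegral ⟨f - C ⟨_, hfx⟩, hf.sub_of_left ?_, ?_⟩
  · exact degree_C_le.trans_lt (natDegree_pos_iff_degree_pos.mp (Nat.pos_of_ne_zero hdeg))
  · rw [eval₂_sub, eval₂_C, eval₂_eq_eval_map]
    exact sub_self _

theorem IsLocalRing.isUnit_eval_of_forall_residue_eval_ne_zero {R : Type*} [CommRing R]
    [IsLocalRing R] {f : R[X]}
    (hres : ∀ z : ResidueField R, (f.map (residue R)).eval z ≠ 0) (r : R) :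
    IsUnit (f.eval r) := by
  have := hres (residue R r)
  rw [eval_map_apply, ne_eq, residue_eq_zero_iff, notMem_maximalIdeal] at this
  exact this

theorem ValuationSubring.inv_eval_mem {K : Type*} [Field K] (O : ValuationSubring K)
    {f : O[X]} (hf : f.Monic)
    (hres : ∀ z : IsLocalRing.ResidueField O, (f.map (IsLocalRing.residue O)).eval z ≠ 0)
    (x : K) : ((f.map O.subtype).eval x)⁻¹ ∈ O := by
  obtain hdeg | hdeg := eq_or_ne f.natDegree 0
  · simp [eq_one_of_monic_natDegree_zero hf hdeg]
  obtain hfx | hfx := O.mem_or_inv_mem ((f.map O.subtype).eval x)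
  · lift x to O using O.mem_of_monic_eval_mem hf hdeg hfx
    obtain ⟨u, hu⟩ := IsLocalRing.isUnit_eval_of_forall_residue_eval_ne_zero hres x
    rw [← O.subtype_apply x, eval_map_apply, ← hu, ← map_units_inv]
    exact SetLike.coe_mem _
  · exact hfx

/-- For a valued field `K` with valuation ring `O`, `f ∈ O[X]` monic whose
reduction has no zero in the residue field, and `a ∈ K`, the set
`U_{f,a} = {f(x)⁻¹ − f(a)⁻¹ : x ∈ K}` is contained in `O`. -/
theorem statement1 (K : Type*) [Field K] (O : ValuationSubring K)
    (f : Polynomial O) (hf : f.Monic)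
    (hres : ∀ z : IsLocalRing.ResidueField O,
      Polynomial.eval z (f.map (IsLocalRing.residue O)) ≠ 0)
    (a : K) :
    ∀ x : K, (Polynomial.eval x (f.map O.subtype))⁻¹ -
      (Polynomial.eval a (f.map O.subtype))⁻¹ ∈ O :=
  fun x => sub_mem (O.inv_eval_mem hf hres x) (O.inv_eval_mem hf hres a)
end

section
/- Let K be a henselian valued field with valuation ring O, maximal ideal m, residue field F. Let f ∈ O[X] be monic such that f̄ has no zero in F, and let a ∈ O with f'(a) ∉ m. Then m ⊆ {f(x)⁻¹ − f(a)⁻¹ : x ∈ K}. -/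
/-! Since `f̄` has no zero in the residue field, `f` takes only unit values on `O`. For `u ∈ m`
the element `c := u + f(a)⁻¹` is then a unit of `O` with `c⁻¹ ≡ f(a) mod m`, so Hensel's lemma
applied to `f - c⁻¹` at `a` yields `b ∈ O` with `f(b) = c⁻¹`, i.e. `f(b)⁻¹ - f(a)⁻¹ = u`. -/

open Polynomial IsLocalRing

theorem Ideal.units_inv_sub_inv_mem {R : Type*} [CommRing R] {I : Ideal R} {x y : Rˣ}
    (h : (x : R) - y ∈ I) : ((y⁻¹ : Rˣ) : R) - ((x⁻¹ : Rˣ) : R) ∈ I := by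
  have factor : ((y⁻¹ : Rˣ) : R) - ((x⁻¹ : Rˣ) : R) =
      ((x⁻¹ : Rˣ) : R) * ((x : R) - y) * ((y⁻¹ : Rˣ) : R) := by
    rw [mul_sub, sub_mul, Units.inv_mul, one_mul, mul_assoc, Units.mul_inv, mul_one]
  rw [factor]
  exact I.mul_mem_right _ (I.mul_mem_left _ h)

section LocalRing

variable {R : Type*} [CommRing R] [IsLocalRing R]

theorem IsLocalRing.isUnit_add_of_mem_maximalIdeal {u v : R} (hu : u ∈ maximalIdeal R)
    (hv : IsUnit v) : IsUnit (u + v) := by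
  by_contra h
  exact notMem_maximalIdeal.2 hv (by simpa using sub_mem ((mem_maximalIdeal _).2 h) hu)

theorem Polynomial.isUnit_eval_of_eval_map_residue_ne_zero {f : R[X]}
    (hf : ∀ z : ResidueField R, (f.map (residue R)).eval z ≠ 0) (a : R) :
    IsUnit (f.eval a) := by
  rw [← notMem_maximalIdeal, ← residue_eq_zero_iff]
  simpa [eval_map, eval₂_at_apply] using hf (residue R a)

end LocalRing

theorem HenselianLocalRing.exists_eval_eq {R : Type*} [CommRing R] [HenselianLocalRing R]
    {f : R[X]} (hf : f.Monic) {a c : R} (hc : f.eval a - c ∈ maximalIdeal R)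
    (ha : IsUnit (f.derivative.eval a)) : ∃ b, f.eval b = c := by
  have hdeg : 0 < f.degree := by
    by_contra! h
    rw [eq_C_of_degree_le_zero h] at ha
    simp at ha
  obtain ⟨b, hb, -⟩ := HenselianLocalRing.is_henselian (f - C c)
    (hf.sub_of_left (degree_C_le.trans_lt hdeg)) a (by simpa using hc) (by simpa using ha)
  exact ⟨b, sub_eq_zero.1 (by simpa using hb)⟩

/-- For a henselian valued field `K` with valuation ring `O`, maximal
ideal `m`, `f ∈ O[X]` monic whose reduction has no zero in the residue field, and
`a ∈ O` with `f'(a) ∉ m`, we have `m ⊆ {f(x)⁻¹ − f(a)⁻¹ : x ∈ K}`. -/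
theorem statement2 (K : Type*) [Field K] (O : ValuationSubring K) [HenselianLocalRing O]
    (f : Polynomial O) (hf : f.Monic)
    (hres : ∀ z : IsLocalRing.ResidueField O,
      Polynomial.eval z (f.map (IsLocalRing.residue O)) ≠ 0)
    (a : O) (ha : Polynomial.eval a f.derivative ∉ IsLocalRing.maximalIdeal O) :
    ∀ u ∈ IsLocalRing.maximalIdeal O, ∃ x : K,
      (u : K) = (Polynomial.eval x (f.map O.subtype))⁻¹ -
        (Polynomial.eval (a : K) (f.map O.subtype))⁻¹ := by
  intro u hu
  obtain ⟨y, hy⟩ := isUnit_eval_of_eval_map_residue_ne_zero hres a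
  obtain ⟨w, hw⟩ := isUnit_add_of_mem_maximalIdeal hu y⁻¹.isUnit
  have hfa : f.eval a - ((w⁻¹ : Oˣ) : O) ∈ maximalIdeal O := by
    have hwy : (w : O) - ((y⁻¹ : Oˣ) : O) ∈ maximalIdeal O := by
      rwa [hw, add_sub_cancel_right]
    simpa only [inv_inv, hy] using Ideal.units_inv_sub_inv_mem hwy
  obtain ⟨b, hb⟩ := HenselianLocalRing.exists_eval_eq hf hfa (notMem_maximalIdeal.1 ha)
  have eval_subtype (x : O) : (f.map O.subtype).eval (x : K) = ((f.eval x : O) : K) := by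
    rw [eval_map]; exact eval₂_hom O.subtype x
  have coe_inv (v : Oˣ) : (((v⁻¹ : Oˣ) : O) : K) = ((v : O) : K)⁻¹ :=
    map_units_inv O.subtype v
  refine ⟨b, ?_⟩
  rw [eval_subtype, eval_subtype, hb, ← hy, coe_inv, inv_inv, hw]
  push_cast [coe_inv]
  ring
end

section
/- For every prime p and every positive integer m there exists a monic irreducible separable polynomial f ∈ 𝔽_p[X] of degree m with f'(0) ≠ 0. -/
/-!
A normal basis element `α` of `𝔽_{p^m} / 𝔽_p` generates the extension, since its Galois
conjugates are pairwise distinct, and has nonzero trace, since the sum of the vectors of a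
basis is nonzero. If `g` is the minimal polynomial of `α`, then `X ^ m g(1/X) / g(0)` is that
of `α⁻¹`, so the linear coefficient of the latter is `g.nextCoeff / g(0) = -Tr(α) / g(0) ≠ 0`.
-/

open Polynomial IntermediateField

namespace minpoly

variable {K L : Type*} [Field K] [Field L] [Algebra K L] {α : L}

theorem aeval_inv_reverse (hα : α ≠ 0) :
    Polynomial.aeval α⁻¹ (minpoly K α).reverse = 0 := by
  have : Invertible α := invertibleOfNonzero hα
  rw [aeval_def, ← invOf_eq_inv, eval₂_reverse_eq_zero_iff, ← aeval_def, minpoly.aeval]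

theorem natDegree_inv_le (hα : IsIntegral K α) :
    (minpoly K α⁻¹).natDegree ≤ (minpoly K α).natDegree := by
  rcases eq_or_ne α 0 with rfl | hα0
  · rw [inv_zero]
  calc (minpoly K α⁻¹).natDegree ≤ (minpoly K α).reverse.natDegree :=
        natDegree_le_of_dvd (minpoly.dvd K _ (aeval_inv_reverse hα0))
          (mt reverse_eq_zero.mp (minpoly.ne_zero hα))
    _ ≤ (minpoly K α).natDegree := reverse_natDegree_le _

theorem natDegree_inv (hα : IsIntegral K α) :
    (minpoly K α⁻¹).natDegree = (minpoly K α).natDegree :=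
  (natDegree_inv_le hα).antisymm (by simpa using natDegree_inv_le hα.inv)

theorem inv_eq_C_mul_reverse (hα : IsIntegral K α) (hα0 : α ≠ 0) :
    minpoly K α⁻¹ = C ((minpoly K α).coeff 0)⁻¹ * (minpoly K α).reverse := by
  have hc := coeff_zero_ne_zero hα hα0
  have htd : (minpoly K α).natTrailingDegree = 0 := natTrailingDegree_eq_zero.mpr (Or.inr hc)
  refine (eq_of_monic_of_dvd_of_natDegree_le (monic hα.inv) ?_ ?_ ?_).symm
  · rw [Monic, leadingCoeff_mul, leadingCoeff_C, reverse_leadingCoeff, trailingCoeff, htd,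
      inv_mul_cancel₀ hc]
  · exact minpoly.dvd K _ (by rw [map_mul, aeval_inv_reverse hα0, mul_zero])
  · rw [natDegree_C_mul (inv_ne_zero hc), reverse_natDegree, htd, Nat.sub_zero, natDegree_inv hα]

theorem coeff_one_inv (hα : IsIntegral K α) (hα0 : α ≠ 0) :
    (minpoly K α⁻¹).coeff 1 = ((minpoly K α).coeff 0)⁻¹ * (minpoly K α).nextCoeff := by
  rw [inv_eq_C_mul_reverse hα hα0, coeff_C_mul, coeff_one_reverse]

theorem nextCoeff_ne_zero_of_trace_ne_zero [FiniteDimensional K L]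
    (h : Algebra.trace K L α ≠ 0) : (minpoly K α).nextCoeff ≠ 0 := fun h0 ↦
  h (by rw [trace_eq_finrank_mul_minpoly_nextCoeff, h0, neg_zero, mul_zero])

end minpoly

namespace IsGalois

variable (K L : Type*) [Field K] [Field L] [Algebra K L] [FiniteDimensional K L] [IsGalois K L]

theorem adjoin_normalBasis_one_eq_top : K⟮normalBasis K L 1⟯ = ⊤ := by
  have hfix : K⟮normalBasis K L 1⟯.fixingSubgroup = ⊥ := by
    refine (Subgroup.eq_bot_iff_forall _).2 fun σ hσ ↦ (normalBasis K L).injective ?_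
    rw [normalBasis_apply, (mem_fixingSubgroup_iff _ σ).1 hσ _ (mem_adjoin_simple_self K _)]
  rw [← fixedField_fixingSubgroup K⟮normalBasis K L 1⟯, hfix, fixedField_bot]

theorem trace_normalBasis_one_ne_zero : Algebra.trace K L (normalBasis K L 1) ≠ 0 := by
  intro h
  refine one_ne_zero <|
    Fintype.linearIndependent_iff.1 (normalBasis K L).linearIndependent (fun _ ↦ 1) ?_ 1
  calc ∑ σ : Gal(L/K), (1 : K) • normalBasis K L σ
        = ∑ σ : Gal(L/K), σ (normalBasis K L 1) :=
        Finset.sum_congr rfl fun σ _ ↦ by rw [one_smul, normalBasis_apply]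
    _ = algebraMap K L (Algebra.trace K L (normalBasis K L 1)) :=
        (trace_eq_sum_automorphisms _).symm
    _ = 0 := by rw [h, map_zero]

end IsGalois

/-- For every prime `p` and positive integer `m` there is a monic
irreducible separable polynomial `f ∈ 𝔽_p[X]` of degree `m` with `f'(0) ≠ 0`. -/
theorem statement5 (p m : ℕ) [Fact p.Prime] (hm : 0 < m) :
    ∃ f : Polynomial (ZMod p), f.Monic ∧ Irreducible f ∧ f.Separable ∧
      f.natDegree = m ∧ Polynomial.eval 0 f.derivative ≠ 0 := by
  set α := IsGalois.normalBasis (ZMod p) (GaloisField p m) 1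
  have hgen : (ZMod p)⟮α⟯ = ⊤ := IsGalois.adjoin_normalBasis_one_eq_top _ _
  have htr : Algebra.trace (ZMod p) _ α ≠ 0 := IsGalois.trace_normalBasis_one_ne_zero _ _
  have hα : IsIntegral (ZMod p) α := .of_finite _ _
  have hα0 : α ≠ 0 := fun h ↦ htr (by rw [h, map_zero])
  refine ⟨minpoly (ZMod p) α⁻¹, minpoly.monic hα.inv, minpoly.irreducible hα.inv,
    Algebra.IsSeparable.isSeparable _ _, ?_, ?_⟩
  · rw [minpoly.natDegree_inv hα, (Field.primitive_element_iff_minpoly_natDegree_eq _ α).1 hgen,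
      GaloisField.finrank p hm.ne']
  · rw [← taylor_coeff_one, taylor_zero, minpoly.coeff_one_inv hα hα0]
    exact mul_ne_zero (inv_ne_zero (minpoly.coeff_zero_ne_zero hα hα0))
      (minpoly.nextCoeff_ne_zero_of_trace_ne_zero htr)
end

section
/- Let K be a henselian valued field with valuation ring O and finite residue field F. Then O is definable in K by an existential first-order formula in the language of rings without parameters. -/
/-!
Let `q = |F|` and let `T` be the set of roots of `X^q - X` in `K`. Comparing valuations in
`t^q = t` shows `T ⊆ O`, and Hensel's lemma lifts the residue of any `x ∈ O` to an element of `T`,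
so `O = T + 𝔪`. For `f = X^q - X + 1` we have `f(O) ⊆ 1 + 𝔪`, while
`v(f(y)) = v(y)^q > 1` for `y ∉ O`; hence `f(K)⁻¹ ⊆ O`. Since `f' ≡ -1` modulo `𝔪`, Hensel's lemma
gives `f(O) = 1 + 𝔪`, so `f(K)⁻¹ ⊇ 1 + 𝔪`. Altogether `O = T + f(K)⁻¹ - 1`, and with `q` fixed
this is an existential definition without parameters.
-/

open FirstOrder Language Polynomial IsLocalRing

attribute [local instance] FirstOrder.Ring.compatibleRingOfRing

theorem IsLocalRing.pow_card_residueField_sub_self_mem_maximalIdeal {R : Type*} [CommRing R]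
    [IsLocalRing R] [Finite (ResidueField R)] (x : R) :
    x ^ Nat.card (ResidueField R) - x ∈ maximalIdeal R := by
  cases nonempty_fintype (ResidueField R)
  rw [← residue_eq_zero_iff, map_sub, map_pow, Nat.card_eq_fintype_card, FiniteField.pow_card,
    sub_self]

namespace HenselianLocalRing

variable {R : Type*} [CommRing R] [HenselianLocalRing R] [Finite (ResidueField R)]

theorem exists_pow_card_sub_self_eq {c x : R}
    (h : x ^ Nat.card (ResidueField R) - x - c ∈ maximalIdeal R) :
    ∃ a, a ^ Nat.card (ResidueField R) - a = c ∧ a - x ∈ maximalIdeal R := by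
  set q := Nat.card (ResidueField R)
  have hq : 1 < q := Finite.one_lt_card
  have hmonic : (X ^ q - (X + C c) : R[X]).Monic :=
    monic_X_pow_sub (by rw [degree_X_add_C]; exact_mod_cast hq)
  have hderiv : IsUnit ((X ^ q - (X + C c) : R[X]).derivative.eval x) := by
    cases nonempty_fintype (ResidueField R)
    rw [← residue_ne_zero_iff_isUnit]
    simp [q, derivative_X_pow, Nat.card_eq_fintype_card]
  obtain ⟨a, ha, hax⟩ := is_henselian _ hmonic x (by simpa [sub_sub] using h) hderiv
  exact ⟨a, by simpa [sub_sub, sub_eq_zero, sub_eq_iff_eq_add'] using ha, hax⟩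

theorem exists_pow_card_eq_self_sub_mem (x : R) :
    ∃ t, t ^ Nat.card (ResidueField R) = t ∧ x - t ∈ maximalIdeal R := by
  obtain ⟨t, ht, htx⟩ := exists_pow_card_sub_self_eq (c := 0) (x := x)
    (by rw [sub_zero]; exact pow_card_residueField_sub_self_mem_maximalIdeal x)
  exact ⟨t, sub_eq_zero.mp ht, by rw [← neg_sub]; exact neg_mem htx⟩

theorem exists_mul_pow_card_sub_self_add_one_eq_one {s : R} (hs : s ∈ maximalIdeal R) :
    ∃ a, (1 + s) * (a ^ Nat.card (ResidueField R) - a + 1) = 1 := by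
  have hunit : IsUnit (1 + s) := by
    rw [← residue_ne_zero_iff_isUnit, map_add, (residue_eq_zero_iff s).mpr hs]
    simp
  obtain ⟨c, hc⟩ := hunit.exists_left_inv
  obtain ⟨a, ha, -⟩ := exists_pow_card_sub_self_eq (c := c - 1) (x := 0) (by
    have : (0 : R) ^ Nat.card (ResidueField R) - 0 - (c - 1) = c * s := by
      rw [zero_pow Finite.card_pos.ne', ← hc]; ring
    exact this ▸ Ideal.mul_mem_left _ c hs)
  exact ⟨a, by rw [ha, sub_add_cancel, mul_comm, hc]⟩

end HenselianLocalRing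

namespace ValuationSubring

variable {K : Type*} [Field K] (O : ValuationSubring K)

theorem mem_of_pow_eq_self {q : ℕ} (hq : 1 < q) {t : K} (ht : t ^ q = t) : t ∈ O := by
  rw [← valuation_le_one_iff]
  by_contra! h
  exact (lt_self_pow₀ h hq).ne' (by rw [← map_pow, ht])

theorem one_le_valuation_pow_card_sub_self_add_one [Finite (ResidueField O)] (y : K) :
    1 ≤ O.valuation (y ^ Nat.card (ResidueField O) - y + 1) := by
  set q := Nat.card (ResidueField O)
  by_cases hy : y ∈ O
  · have hlt : O.valuation (y ^ q - y) < O.valuation 1 := by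
      simpa using (valuation_lt_one_iff O (⟨y, hy⟩ ^ q - ⟨y, hy⟩)).mp
        (pow_card_residueField_sub_self_mem_maximalIdeal _)
    rw [Valuation.map_add_eq_of_lt_right _ hlt, map_one]
  · have hy : 1 < O.valuation y := by rwa [← not_le, valuation_le_one_iff]
    have hpow : O.valuation y < O.valuation (y ^ q) := by
      rw [map_pow]; exact lt_self_pow₀ hy Finite.one_lt_card
    have hsub : O.valuation (y ^ q - y) = O.valuation y ^ q := by
      rw [Valuation.map_sub_eq_of_lt_left _ hpow, map_pow]
    rw [Valuation.map_add_eq_of_lt_left, hsub]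
    · exact one_le_pow₀ hy.le
    · rw [hsub, map_one]; exact one_lt_pow₀ hy Finite.card_pos.ne'

theorem mem_iff_exists_pow_card [HenselianLocalRing O] [Finite (ResidueField O)] (x : K) :
    x ∈ O ↔ ∃ t a u : K, t ^ Nat.card (ResidueField O) = t ∧
      u * (a ^ Nat.card (ResidueField O) - a + 1) = 1 ∧ x = t + u - 1 := by
  constructor
  · intro hx
    obtain ⟨t, ht, hxt⟩ := HenselianLocalRing.exists_pow_card_eq_self_sub_mem (⟨x, hx⟩ : O)
    obtain ⟨a, ha⟩ := HenselianLocalRing.exists_mul_pow_card_sub_self_add_one_eq_one hxt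
    refine ⟨t, a, 1 + (x - t), by exact_mod_cast ht, ?_, by ring⟩
    simpa using congrArg Subtype.val ha
  · rintro ⟨t, a, u, ht, hu, rfl⟩
    have hu_mem : u ∈ O := by
      rw [eq_inv_of_mul_eq_one_left hu, ← valuation_le_one_iff, map_inv₀]
      exact inv_le_one_of_one_le₀ (O.one_le_valuation_pow_card_sub_self_add_one a)
    have ht_mem : t ∈ O := O.mem_of_pow_eq_self Finite.one_lt_card ht
    exact _root_.sub_mem (O.add_mem _ _ ht_mem hu_mem) O.one_mem

end ValuationSubring

namespace FirstOrder.Ring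

variable {α : Type*} {n : ℕ}

noncomputable def bdEqualOfFreeCommRing (p p' : FreeCommRing (α ⊕ Fin n)) :
    Language.ring.BoundedFormula α n :=
  (termOfFreeCommRing p).bdEqual (termOfFreeCommRing p')

theorem isAtomic_bdEqualOfFreeCommRing (p p' : FreeCommRing (α ⊕ Fin n)) :
    (bdEqualOfFreeCommRing p p').IsAtomic :=
  .equal _ _

@[simp]
theorem realize_bdEqualOfFreeCommRing {R : Type*} [CommRing R] [CompatibleRing R]
    (p p' : FreeCommRing (α ⊕ Fin n)) (v : α → R) (xs : Fin n → R) :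
    (bdEqualOfFreeCommRing p p').Realize v xs ↔
      FreeCommRing.lift (Sum.elim v xs) p = FreeCommRing.lift (Sum.elim v xs) p' := by
  simp [bdEqualOfFreeCommRing]

noncomputable def valuationRingFormula (q : ℕ) : Language.ring.BoundedFormula (Fin 1) 3 :=
  let x : FreeCommRing (Fin 1 ⊕ Fin 3) := .of (.inl 0)
  let t : FreeCommRing (Fin 1 ⊕ Fin 3) := .of (.inr 0)
  let a : FreeCommRing (Fin 1 ⊕ Fin 3) := .of (.inr 1)
  let u : FreeCommRing (Fin 1 ⊕ Fin 3) := .of (.inr 2)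
  bdEqualOfFreeCommRing (t ^ q) t ⊓ bdEqualOfFreeCommRing (u * (a ^ q - a + 1)) 1 ⊓
    bdEqualOfFreeCommRing x (t + u - 1)

theorem isQF_valuationRingFormula (q : ℕ) : (valuationRingFormula q).IsQF :=
  (((isAtomic_bdEqualOfFreeCommRing _ _).isQF.inf (isAtomic_bdEqualOfFreeCommRing _ _).isQF).inf
    (isAtomic_bdEqualOfFreeCommRing _ _).isQF)

theorem realize_exs_valuationRingFormula {R : Type*} [CommRing R] (q : ℕ) (x : R) :
    (valuationRingFormula q).exs.Realize (fun _ => x) ↔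
      ∃ t a u : R, t ^ q = t ∧ u * (a ^ q - a + 1) = 1 ∧ x = t + u - 1 := by
  simp only [BoundedFormula.realize_exs, valuationRingFormula, BoundedFormula.realize_inf,
    realize_bdEqualOfFreeCommRing, map_pow, map_mul, map_add, map_sub, map_one,
    FreeCommRing.lift_of, Sum.elim_inl, Sum.elim_inr, and_assoc]
  exact ⟨fun ⟨xs, h⟩ => ⟨xs 0, xs 1, xs 2, h⟩, fun ⟨t, a, u, h⟩ => ⟨![t, a, u], h⟩⟩

end FirstOrder.Ring

/-- If `K` is a henselian valued field with valuation ring `O` and finite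
residue field, then `O` is defined in `K` by a parameter-free existential formula in
the language of rings (a block of existential quantifiers applied to a
quantifier-free formula). -/
theorem statement9 (K : Type*) [Field K] (O : ValuationSubring K) [HenselianLocalRing O]
    [Finite (IsLocalRing.ResidueField O)] :
    ∃ (n : ℕ) (ψ : Language.ring.BoundedFormula (Fin 1) n), ψ.IsQF ∧
      ∀ x : K, ψ.exs.Realize (fun _ => x) ↔ x ∈ O :=
  ⟨3, Ring.valuationRingFormula (Nat.card (IsLocalRing.ResidueField O)),
    Ring.isQF_valuationRingFormula _, fun x =>
      (Ring.realize_exs_valuationRingFormula _ x).trans (O.mem_iff_exists_pow_card x).symm⟩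
end

section
/- Let F be an infinite field with prime field F₀, and suppose the algebraic closure of F₀ inside F (denoted F_alg) is not algebraically closed. Then there exist a monic separable irreducible polynomial f ∈ F₀[X] with no zero in F, and an element a ∈ F with f'(a) ≠ 0. -/
/-! The monic irreducible polynomial comes from a missing root in `F_alg`; it has no root in `F`
since such a root would lie in `F_alg`. It is separable because the prime field is perfect
(`ℚ`, or finite), so `f' ≠ 0`, and a nonzero polynomial cannot vanish on an infinite field. -/

open Polynomial

theorem Subfield.finite_bot_of_charP (F : Type*) [Field F] (p : ℕ) [Fact p.Prime] [CharP F p] :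
    Finite (⊥ : Subfield F) :=
  (Set.finite_range (ZMod.castHom (dvd_refl p) F)).subset
    (bot_le : ⊥ ≤ (ZMod.castHom (dvd_refl p) F).fieldRange)

instance Subfield.perfectField_bot (F : Type*) [Field F] : PerfectField (⊥ : Subfield F) := by
  rcases CharP.exists' F with _ | ⟨p, _, _⟩
  · infer_instance
  · have := Subfield.finite_bot_of_charP F p
    infer_instance

theorem exists_monic_irreducible_forall_aeval_ne_zero {K L : Type*} [Field K] [Field L]
    [Algebra K L] (h : ¬ IsAlgClosed (algebraicClosure K L)) :
    ∃ f : K[X], f.Monic ∧ Irreducible f ∧ ∀ x : L, aeval x f ≠ 0 := by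
  contrapose! h
  refine (IsAlgClosure.of_exists_root (F := K) fun f hmon hirr ↦ ?_).1
  obtain ⟨x, hx⟩ := h f hmon hirr
  have hx_alg : x ∈ algebraicClosure K L := mem_algebraicClosure_iff.2 ⟨f, hmon.ne_zero, hx⟩
  refine ⟨⟨x, hx_alg⟩, ?_⟩
  rwa [← ZeroMemClass.coe_eq_zero, ← IntermediateField.aeval_coe]

theorem Polynomial.exists_aeval_ne_zero {K L : Type*} [Field K] [CommRing L] [IsDomain L]
    [Infinite L] [Algebra K L] {p : K[X]} (hp : p ≠ 0) : ∃ a : L, aeval a p ≠ 0 := by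
  by_contra! h
  refine hp (Polynomial.map_eq_zero (algebraMap K L) |>.1 (Polynomial.funext fun a ↦ ?_))
  simpa [eval_map_algebraMap] using h a

/-- Let `F` be an infinite field with prime field `F₀` (the smallest
subfield `⊥ ⊆ F`), and suppose the relative algebraic closure `F_alg` of `F₀` in `F`
is not algebraically closed. Then there exist a monic separable irreducible polynomial
`f ∈ F₀[X]` with no zero in `F`, and `a ∈ F` with `f'(a) ≠ 0`. -/
theorem statement14 (F : Type*) [Field F] [Infinite F]
    (halg : ¬ IsAlgClosed (algebraicClosure (⊥ : Subfield F) F)) :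
    ∃ f : Polynomial (⊥ : Subfield F), f.Monic ∧ f.Separable ∧ Irreducible f ∧
      (∀ x : F, Polynomial.aeval x f ≠ 0) ∧
      ∃ a : F, Polynomial.aeval a f.derivative ≠ 0 := by
  obtain ⟨f, hmonic, hirr, hno_root⟩ := exists_monic_irreducible_forall_aeval_ne_zero halg
  have hsep : f.Separable := PerfectField.separable_of_irreducible hirr
  exact ⟨f, hmonic, hsep, hirr, hno_root,
    exists_aeval_ne_zero ((separable_iff_derivative_ne_zero hirr).1 hsep)⟩
end

section
/- For every odd prime p and every integer n with n not a quadratic residue modulo p, if additionally p > 81, then for every henselian valued field K with valuation ring O and residue field 𝔽_p, the set (f(K)⁻¹ − f(K)⁻¹) + (f(K)⁻¹·f(K)⁻¹ ∪ {0}) with f = X² − n equals O. -/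
/-!
Write `q x = (x² - n)⁻¹`. Over `𝔽_p` the map `q` is two-to-one, so `A = {q a | a ≠ 0}` and
`B = {-q b}` have sizes summing to at least `p`, and Cauchy–Davenport makes `A + B` miss at most
one residue. Since `q 0 * q 0 ≠ q 0 * q 1`, every residue is `q a - q b + q c * q d` with `a ≠ 0`.
Such a representation lifts to `O`: lift `b, c, d` arbitrarily; the remaining term `t` is then a
unit of residue `q a`, and `q x = t` means `x² = n + t⁻¹`, whose residue `a²` is a nonzero square,
so Hensel's lemma applies (`p ≠ 2` as `n` is a non-square). Conversely `q` maps `K` into `O`: if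
`(x² - n)⁻¹ ∉ O` then `x² - n ∈ O`, so `x ∈ O`, and then `x² - n` is a unit since its residue is not
zero.
-/

open Finset Pointwise

theorem Finset.card_le_two_mul_card_image_of_eq_or_eq_neg {α β : Type*} [DecidableEq α]
    [DecidableEq β] [Neg α] (s : Finset α) {g : α → β}
    (hg : ∀ x y, g x = g y → x = y ∨ x = -y) : #s ≤ 2 * #(s.image g) := by
  refine card_le_mul_card_image s 2 fun v hv ↦ ?_
  obtain ⟨x₀, -, rfl⟩ := mem_image.mp hv
  calc #{x ∈ s | g x = g x₀} ≤ #{x₀, -x₀} := card_le_card fun x hx ↦ by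
          rcases hg x x₀ (mem_filter.mp hx).2 with rfl | rfl <;> simp
    _ ≤ 2 := card_le_two

theorem Finset.mem_or_mem_of_card_add_one_ge {α : Type*} [Fintype α] {s : Finset α}
    (hs : Fintype.card α ≤ #s + 1) {x y : α} (hxy : x ≠ y) : x ∈ s ∨ y ∈ s := by
  classical
  by_contra! h
  have : #{x, y} ≤ #sᶜ := card_le_card fun z hz ↦ by
    rcases mem_insert.mp hz with rfl | hz
    · simpa using h.1
    · simpa [mem_singleton.mp hz] using h.2
  rw [card_pair hxy, card_compl] at this
  omega

theorem eq_or_eq_neg_of_inv_sq_sub_eq {F : Type*} [Field F] {n x y : F}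
    (h : (x ^ 2 - n)⁻¹ = (y ^ 2 - n)⁻¹) : x = y ∨ x = -y := by
  simpa [sq_eq_sq_iff_eq_or_eq_neg] using h

theorem ZMod.exists_eq_inv_sq_sub_sub_add_mul {p : ℕ} [Fact p.Prime] {n : ZMod p} (hn : n ≠ 0)
    (r : ZMod p) : ∃ a b c d : ZMod p, a ≠ 0 ∧
      r = (a ^ 2 - n)⁻¹ - (b ^ 2 - n)⁻¹ + (c ^ 2 - n)⁻¹ * (d ^ 2 - n)⁻¹ := by
  set q : ZMod p → ZMod p := fun x ↦ (x ^ 2 - n)⁻¹ with hq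
  set A := (univ.erase 0).image q
  set B := univ.image fun x ↦ -q x
  have hp := (Fact.out : p.Prime).two_le
  have hA : p - 1 ≤ 2 * #A := by
    simpa [ZMod.card] using (univ.erase (0 : ZMod p)).card_le_two_mul_card_image_of_eq_or_eq_neg
      (g := q) fun _ _ ↦ eq_or_eq_neg_of_inv_sq_sub_eq
  have hB : p ≤ 2 * #B := by
    simpa [ZMod.card] using (univ : Finset (ZMod p)).card_le_two_mul_card_image_of_eq_or_eq_neg
      (g := fun x ↦ -q x) fun _ _ h ↦ eq_or_eq_neg_of_inv_sq_sub_eq (neg_injective h)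
  have hAB : p ≤ #(A + B) + 1 := by
    have := ZMod.cauchy_davenport Fact.out (s := A) (t := B)
      (.image (by simp [← card_pos, ZMod.card]; omega) _) (.image univ_nonempty _)
    omega
  have hq0 : q 0 ≠ 0 := by simpa [hq] using hn
  have hq01 : q 0 * q 0 ≠ q 0 * q 1 := fun h ↦ by
    simpa using eq_or_eq_neg_of_inv_sq_sub_eq (mul_left_cancel₀ hq0 h)
  obtain ⟨d, hd⟩ : ∃ d, r - q 0 * q d ∈ A + B := by
    rcases mem_or_mem_of_card_add_one_ge (by simpa [ZMod.card] using hAB)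
      (sub_right_injective.ne hq01) with h | h
    exacts [⟨0, h⟩, ⟨1, h⟩]
  obtain ⟨_, ha, _, hb, hr⟩ := mem_add.mp hd
  obtain ⟨a, ha0, rfl⟩ := mem_image.mp ha
  obtain ⟨b, -, rfl⟩ := mem_image.mp hb
  exact ⟨a, b, 0, d, ne_of_mem_erase ha0, by linear_combination -hr⟩

theorem exists_eq_inv_sq_sub_sub_add_mul_of_ringEquiv {F : Type*} [Field F] {p : ℕ}
    [Fact p.Prime] (e : ZMod p ≃+* F) {n : F} (hn : n ≠ 0) (r : F) :
    ∃ a b c d : F, a ≠ 0 ∧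
      r = (a ^ 2 - n)⁻¹ - (b ^ 2 - n)⁻¹ + (c ^ 2 - n)⁻¹ * (d ^ 2 - n)⁻¹ := by
  obtain ⟨a, b, c, d, ha, h⟩ :=
    ZMod.exists_eq_inv_sq_sub_sub_add_mul (n := e.symm n) (by simpa using hn) (e.symm r)
  exact ⟨e a, e b, e c, e d, by simpa using ha, by simpa using congrArg e h⟩

open IsLocalRing Ring

theorem IsLocalRing.residue_ringInverse {R : Type*} [CommRing R] [IsLocalRing R] (u : R) :
    residue R u⁻¹ʳ = (residue R u)⁻¹ := by
  by_cases hu : IsUnit u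
  · exact eq_inv_of_mul_eq_one_right <| by rw [← map_mul, mul_inverse_cancel u hu, map_one]
  · rw [inverse_non_unit u hu, map_zero, (residue_eq_zero_iff u).mpr hu, inv_zero]

theorem IsLocalRing.isUnit_sq_sub {R : Type*} [CommRing R] [IsLocalRing R] {c : R}
    (hc : ¬IsSquare (residue R c)) (x : R) : IsUnit (x ^ 2 - c) := by
  refine (residue_ne_zero_iff_isUnit _).mp fun h ↦ hc ⟨residue R x, ?_⟩
  rw [map_sub, map_pow, sub_eq_zero] at h
  rw [← h, sq]

open Polynomial in
theorem HenselianLocalRing.isSquare_of_isSquare_residue {R : Type*} [CommRing R]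
    [HenselianLocalRing R] (h2 : (2 : ResidueField R) ≠ 0) {u : R} (hu : IsUnit u)
    (hsq : IsSquare (residue R u)) : IsSquare u := by
  obtain ⟨a, ha⟩ := hsq
  have ha0 : a ≠ 0 := by
    rintro rfl
    exact (residue_ne_zero_iff_isUnit u).mpr hu (by simpa using ha)
  have hensel := ((HenselianLocalRing.TFAE R).out 0 1).mp ‹_›
  obtain ⟨x, hx, -⟩ := hensel (X ^ 2 - C u) (monic_X_pow_sub_C u two_ne_zero) a
    (by simp [ha, sq]) (by
      simp only [derivative_sub, derivative_X_pow, derivative_C, sub_zero, map_mul, map_natCast]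
      simpa [ha0] using h2)
  exact ⟨x, by simpa [sub_eq_zero, sq, eq_comm] using hx⟩

namespace HenselianLocalRing

variable {R : Type*} [CommRing R] [HenselianLocalRing R] {c : R}

theorem exists_ringInverse_sq_sub_eq (hc : ¬IsSquare (residue R c))
    (h2 : (2 : ResidueField R) ≠ 0) {t : R} {a : ResidueField R} (ha : a ≠ 0)
    (ht : residue R t = (a ^ 2 - residue R c)⁻¹) : ∃ x : R, (x ^ 2 - c)⁻¹ʳ = t := by
  have hac : a ^ 2 - residue R c ≠ 0 := fun h ↦ hc ⟨a, by rw [← sq]; linear_combination -h⟩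
  have htu : IsUnit t := (residue_ne_zero_iff_isUnit t).mp (by simpa [ht] using hac)
  have hsq : residue R (c + t⁻¹ʳ) = a * a := by
    rw [map_add, residue_ringInverse, ht, inv_inv, ← sq, add_sub_cancel]
  have hunit : IsUnit (c + t⁻¹ʳ) :=
    (residue_ne_zero_iff_isUnit _).mp (by rw [hsq]; exact mul_ne_zero ha ha)
  obtain ⟨x, hx⟩ := isSquare_of_isSquare_residue h2 hunit ⟨a, hsq⟩
  exact ⟨x, by rw [sq, ← hx, add_sub_cancel_left, inverse_inverse htu]⟩

theorem exists_eq_ringInverse_sq_sub (hc : ¬IsSquare (residue R c))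
    (h2 : (2 : ResidueField R) ≠ 0)
    (hF : ∀ r : ResidueField R, ∃ a b c' d : ResidueField R, a ≠ 0 ∧
      r = (a ^ 2 - residue R c)⁻¹ - (b ^ 2 - residue R c)⁻¹ +
        (c' ^ 2 - residue R c)⁻¹ * (d ^ 2 - residue R c)⁻¹)
    (w : R) : ∃ x y z v : R,
      w = (x ^ 2 - c)⁻¹ʳ - (y ^ 2 - c)⁻¹ʳ + (z ^ 2 - c)⁻¹ʳ * (v ^ 2 - c)⁻¹ʳ := by
  obtain ⟨a, b, c', d, ha, hr⟩ := hF (residue R w)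
  obtain ⟨y, rfl⟩ := residue_surjective b
  obtain ⟨z, rfl⟩ := residue_surjective c'
  obtain ⟨v, rfl⟩ := residue_surjective d
  obtain ⟨x, hx⟩ := exists_ringInverse_sq_sub_eq hc h2 ha
    (t := w + (y ^ 2 - c)⁻¹ʳ - (z ^ 2 - c)⁻¹ʳ * (v ^ 2 - c)⁻¹ʳ)
    (by simp only [map_add, map_sub, map_mul, map_pow, residue_ringInverse, hr]; ring)
  exact ⟨x, y, z, v, by rw [hx]; ring⟩

end HenselianLocalRing

namespace ValuationSubring

variable {K : Type*} [Field K] (O : ValuationSubring K)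

theorem coe_ringInverse {u : O} (hu : IsUnit u) : ((u⁻¹ʳ : O) : K) = (u : K)⁻¹ :=
  eq_inv_of_mul_eq_one_right <| by exact_mod_cast congrArg ((↑) : O → K) (mul_inverse_cancel u hu)

theorem mem_of_sq_mem {x : K} (hx : x ^ 2 ∈ O) : x ∈ O := by
  rw [← valuation_le_one_iff, map_pow] at hx
  exact (O.valuation_le_one_iff x).mp ((pow_le_one_iff two_ne_zero).mp hx)

theorem inv_sq_sub_mem {c : O} (hc : ¬IsSquare (residue O c)) (x : K) : (x ^ 2 - c)⁻¹ ∈ O := by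
  rcases O.mem_or_inv_mem (x ^ 2 - c) with h | h
  · lift x to O using O.mem_of_sq_mem (by simpa using O.add_mem _ _ h c.2)
    simpa using O.coe_ringInverse (isUnit_sq_sub hc x) ▸ SetLike.coe_mem _
  · exact h

end ValuationSubring

theorem statement17_general (p : ℕ) (hp : p.Prime)
    (n : ℤ) (hn : ¬ ∃ y : ZMod p, y ^ 2 = (n : ZMod p))
    (K : Type*) [Field K] (O : ValuationSubring K) [HenselianLocalRing O]
    (hcard : Nat.card (IsLocalRing.ResidueField O) = p) :
    ∀ w : K, w ∈ O ↔ ∃ x y : K,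
      w = (x ^ 2 - (n : K))⁻¹ - (y ^ 2 - (n : K))⁻¹ ∨
      ∃ z v : K, w = (x ^ 2 - (n : K))⁻¹ - (y ^ 2 - (n : K))⁻¹ +
        (z ^ 2 - (n : K))⁻¹ * (v ^ 2 - (n : K))⁻¹ := by
  have : Fact p.Prime := ⟨hp⟩
  have : Finite (ResidueField O) := Nat.finite_of_card_ne_zero (hcard ▸ hp.ne_zero)
  let := Fintype.ofFinite (ResidueField O)
  let e := ZMod.ringEquivOfPrime (ResidueField O) hp (by rw [← Nat.card_eq_fintype_card, hcard])
  have hnO : ¬IsSquare (residue O (n : O)) := by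
    rintro ⟨y, hy⟩
    exact hn ⟨e.symm y, e.injective (by simp [sq, ← hy])⟩
  have h2 : (2 : ResidueField O) ≠ 0 :=
    Ring.two_ne_zero fun h ↦ hnO (FiniteField.isSquare_of_char_two h _)
  have hn0 : residue O (n : O) ≠ 0 := fun h ↦ hnO (h ▸ IsSquare.zero)
  have hmem := O.inv_sq_sub_mem hnO
  push_cast at hmem
  intro w
  constructor
  · intro hw
    obtain ⟨x, y, z, v, h⟩ := HenselianLocalRing.exists_eq_ringInverse_sq_sub hnO h2
      (exists_eq_inv_sq_sub_sub_add_mul_of_ringEquiv e hn0) ⟨w, hw⟩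
    refine ⟨x, y, Or.inr ⟨z, v, ?_⟩⟩
    simpa [O.coe_ringInverse (isUnit_sq_sub hnO _)] using congrArg ((↑) : O → K) h
  · rintro ⟨x, y, rfl | ⟨z, v, rfl⟩⟩
    · exact sub_mem (hmem x) (hmem y)
    · exact add_mem (sub_mem (hmem x) (hmem y)) (mul_mem (hmem z) (hmem v))

/-- Let `p > 81` be an odd prime and `n` an integer that is not a
quadratic residue mod `p`. Then for every henselian valued field `K` with valuation
ring `O` and residue field `𝔽_p`, taking `f = X² − n`, the set
`(f(K)⁻¹ − f(K)⁻¹) + (f(K)⁻¹·f(K)⁻¹ ∪ {0})` equals `O`. -/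
theorem statement17 (p : ℕ) (hp : p.Prime) (hodd : Odd p) (hbig : 81 < p)
    (n : ℤ) (hn : ¬ ∃ y : ZMod p, y ^ 2 = (n : ZMod p))
    (K : Type*) [Field K] (O : ValuationSubring K) [HenselianLocalRing O]
    [Finite (IsLocalRing.ResidueField O)]
    (hcard : Nat.card (IsLocalRing.ResidueField O) = p) :
    ∀ w : K, w ∈ O ↔ ∃ x y : K,
      w = (x ^ 2 - (n : K))⁻¹ - (y ^ 2 - (n : K))⁻¹ ∨
      ∃ z v : K, w = (x ^ 2 - (n : K))⁻¹ - (y ^ 2 - (n : K))⁻¹ +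
        (z ^ 2 - (n : K))⁻¹ * (v ^ 2 - (n : K))⁻¹ :=
  statement17_general p hp n hn K O hcard
end
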